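/- Let Z = (E, G, τ, σ) be a zip datum and x ∈ G. The map Ψ : G_1^x → τ(E) x σ(E), y ↦ yx, maps Z_1^x-equivalence classes in G_1^x = τ(E) bijectively onto Z-equivalence classes contained in the double coset τ(E) x σ(E). -/

import Mathlib

variable {E G : Type*} [Group E] [Group G]

/-- The conjugated homomorphism ˣσ : e ↦ x σ(e) x⁻¹. -/
def conjHom (x : G) (σ : E →* G) : E →* G :=
  ((MulAut.conj x).toMonoidHom).comp σ

/-- The first refinement group E₁ = σ⁻¹(τ(E)). -/
def Eone (τ σ : E →* G) : Subgroup E :=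
  Subgroup.comap σ (Subgroup.map τ ⊤)

/-- E₁ˣ = (ˣσ)⁻¹(τ(E)). -/
def EoneX (τ σ : E →* G) (x : G) : Subgroup E :=
  Eone τ (conjHom x σ)

/-- The iterated refinements Eᵢ. -/
def Eseq (τ σ : E →* G) : ℕ → Subgroup E
  | 0 => ⊤
  | n + 1 => Subgroup.comap σ (Subgroup.map τ (Eseq τ σ n))

/-- The iterated refinements Gᵢ. -/
def Gseq (τ σ : E →* G) : ℕ → Subgroup G
  | 0 => ⊤
  | n + 1 => Subgroup.map τ (Eseq τ σ n)

/-- E∞: the largest subgroup F of E with σ(F) ⊆ τ(F). -/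
def Einf (τ σ : E →* G) : Subgroup E :=
  sSup {F : Subgroup E | Subgroup.map σ F ≤ Subgroup.map τ F}

/-- G∞ = τ(E∞). -/
def Ginf (τ σ : E →* G) : Subgroup G :=
  Subgroup.map τ (Einf τ σ)

/-- E∞ˣ: the largest subgroup F of E with ˣσ(F) ⊆ τ(F). -/
def EinfX (τ σ : E →* G) (x : G) : Subgroup E :=
  Einf τ (conjHom x σ)

/-- G∞ˣ = τ(E∞ˣ). -/
def GinfX (τ σ : E →* G) (x : G) : Subgroup G :=
  Subgroup.map τ (EinfX τ σ x)

/-- The ∼_Z-equivalence class of x : all τ(e) g x σ(e)⁻¹ with e ∈ E, g ∈ G∞ˣ. -/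
def zipOrbit (τ σ : E →* G) (x : G) : Set G :=
  {y | ∃ e : E, ∃ g ∈ GinfX τ σ x, y = τ e * g * x * (σ e)⁻¹}

/-- G₁ = τ(E) as a subgroup of G. -/
def Gone (τ : E →* G) : Subgroup G := Subgroup.map τ ⊤

/-- The restriction τ : E₁ˣ →* G₁ of the refined zip datum Z₁ˣ. -/
def tauOne (τ σ : E →* G) (x : G) : (EoneX τ σ x) →* (Gone τ) :=
  MonoidHom.codRestrict (τ.comp (EoneX τ σ x).subtype) (Gone τ)
    (fun e => ⟨e.1, trivial, rfl⟩)

/-- The restriction ˣσ : E₁ˣ →* G₁ of the refined zip datum Z₁ˣ. -/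
def sigmaOne (τ σ : E →* G) (x : G) : (EoneX τ σ x) →* (Gone τ) :=
  MonoidHom.codRestrict ((conjHom x σ).comp (EoneX τ σ x).subtype) (Gone τ)
    (fun e => e.2)

/-!
Because `y ∈ τ(E)`, the datum `Z₁ˣ` at `y` is the restriction of `Z` at `yx` to `E₁ˣ → τ(E)`:
`ʸ(ˣσ) = ʸˣσ`. The largest compatible subgroup `E∞` of `Z` at `yx` already lies in `E₁ˣ`, and
`E∞` commutes with such restrictions, so `G∞ʸ(Z₁ˣ) = G∞ʸˣ(Z)` and the two equivalence relations
agree under `y ↦ yx`. The classes meet the double coset exactly as claimed since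
`τ(e) x σ(e') = τ(e'⁻¹) · τ(e'e) x · σ(e'⁻¹)⁻¹`.
-/

lemma conjHom_apply (x : G) (σ : E →* G) (e : E) : conjHom x σ e = x * σ e * x⁻¹ := rfl

lemma conjHom_mul (y x : G) (σ : E →* G) : conjHom (y * x) σ = conjHom y (conjHom x σ) := by
  ext e
  simp only [conjHom_apply]
  group

lemma le_Einf {τ σ : E →* G} {F : Subgroup E}
    (h : Subgroup.map σ F ≤ Subgroup.map τ F) : F ≤ Einf τ σ :=
  le_sSup h

lemma map_Einf_le (τ σ : E →* G) :
    Subgroup.map σ (Einf τ σ) ≤ Subgroup.map τ (Einf τ σ) := by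
  rw [Einf, (Subgroup.gc_map_comap σ).l_sSup]
  exact iSup₂_le fun F hF => hF.trans (Subgroup.map_mono (le_sSup hF))

lemma Einf_le_Eone (τ σ : E →* G) : Einf τ σ ≤ Eone τ σ := fun e he =>
  Subgroup.map_mono le_top (map_Einf_le τ σ ⟨e, he, rfl⟩)

lemma GinfX_le_Gone (τ σ : E →* G) (x : G) : GinfX τ σ x ≤ Gone τ :=
  Subgroup.map_mono le_top

lemma Eone_conjHom_of_mem_Gone {τ : E →* G} {y : G} (hy : y ∈ Gone τ) (σ : E →* G) :
    Eone τ (conjHom y σ) = Eone τ σ := by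
  ext e
  change y * σ e * y⁻¹ ∈ Gone τ ↔ σ e ∈ Gone τ
  constructor
  · intro h
    simpa [mul_assoc] using (Gone τ).mul_mem ((Gone τ).mul_mem ((Gone τ).inv_mem hy) h) hy
  · intro h
    exact (Gone τ).mul_mem ((Gone τ).mul_mem hy h) ((Gone τ).inv_mem hy)

section Restriction

variable {H : Subgroup E} {K : Subgroup G} {τ σ : E →* G} {τ' σ' : H →* K}

lemma map_le_map_iff_map_subtype (hτ : K.subtype.comp τ' = τ.comp H.subtype)
    (hσ : K.subtype.comp σ' = σ.comp H.subtype) (F : Subgroup H) :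
    F.map σ' ≤ F.map τ' ↔ (F.map H.subtype).map σ ≤ (F.map H.subtype).map τ := by
  rw [Subgroup.map_map, Subgroup.map_map, ← hτ, ← hσ, ← Subgroup.map_map, ← Subgroup.map_map]
  exact (Subgroup.map_le_map_iff_of_injective K.subtype_injective).symm

lemma map_subtype_Einf_of_restrict (hτ : K.subtype.comp τ' = τ.comp H.subtype)
    (hσ : K.subtype.comp σ' = σ.comp H.subtype) (hH : Einf τ σ ≤ H) :
    (Einf τ' σ').map H.subtype = Einf τ σ := by
  refine le_antisymm (le_Einf ((map_le_map_iff_map_subtype hτ hσ _).1 (map_Einf_le τ' σ'))) ?_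
  have hF : ((Einf τ σ).subgroupOf H).map H.subtype = Einf τ σ := by
    rw [Subgroup.subgroupOf_map_subtype, inf_eq_left.2 hH]
  have hcompat := map_Einf_le τ σ
  rw [← hF, ← map_le_map_iff_map_subtype hτ hσ] at hcompat
  exact hF ▸ Subgroup.map_mono (le_Einf hcompat)

end Restriction

section Refinement

variable (τ σ : E →* G) (x : G)

lemma subtype_comp_tauOne : (Gone τ).subtype.comp (tauOne τ σ x) = τ.comp (EoneX τ σ x).subtype :=
  rfl

lemma subtype_comp_conjHom_sigmaOne (y : Gone τ) :
    (Gone τ).subtype.comp (conjHom y (sigmaOne τ σ x)) =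
      (conjHom ((y : G) * x) σ).comp (EoneX τ σ x).subtype := by
  rw [conjHom_mul]
  rfl

lemma EinfX_le_EoneX (y : Gone τ) : EinfX τ σ ((y : G) * x) ≤ EoneX τ σ x := by
  rw [EinfX, EoneX, ← Eone_conjHom_of_mem_Gone y.2, ← conjHom_mul]
  exact Einf_le_Eone τ _

lemma map_subtype_GinfX_refined (y : Gone τ) :
    (GinfX (tauOne τ σ x) (sigmaOne τ σ x) y).map (Gone τ).subtype = GinfX τ σ ((y : G) * x) := by
  rw [GinfX, Subgroup.map_map, subtype_comp_tauOne, ← Subgroup.map_map, EinfX,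
    map_subtype_Einf_of_restrict (subtype_comp_tauOne τ σ x)
      (subtype_comp_conjHom_sigmaOne τ σ x y) (EinfX_le_EoneX τ σ x y)]
  rfl

lemma mem_GinfX_refined_iff (y g : Gone τ) :
    g ∈ GinfX (tauOne τ σ x) (sigmaOne τ σ x) y ↔ (g : G) ∈ GinfX τ σ ((y : G) * x) := by
  rw [← map_subtype_GinfX_refined]
  exact (Subgroup.mem_map_iff_mem (Gone τ).subtype_injective).symm

lemma coe_refined_orbit_elt_mul (y g : Gone τ) (e : EoneX τ σ x) :
    ((tauOne τ σ x e * g * y * (sigmaOne τ σ x e)⁻¹ : Gone τ) : G) * x =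
      τ e * g * ((y : G) * x) * (σ e)⁻¹ := by
  change τ e * g * y * (x * σ e * x⁻¹)⁻¹ * x = _
  group

lemma mem_EoneX_of_eq {y y' g : G} (hy : y ∈ Gone τ) (hy' : y' ∈ Gone τ) (hg : g ∈ Gone τ)
    {e : E} (h : y' * x = τ e * g * (y * x) * (σ e)⁻¹) : e ∈ EoneX τ σ x := by
  have hσ : x * σ e * x⁻¹ = y'⁻¹ * (τ e * g * y) := by
    rw [eq_mul_inv_iff_mul_eq, ← mul_assoc, ← eq_inv_mul_iff_mul_eq] at h
    rw [h]
    group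
  change x * σ e * x⁻¹ ∈ Gone τ
  rw [hσ]
  exact (Gone τ).mul_mem ((Gone τ).inv_mem hy')
    ((Gone τ).mul_mem ((Gone τ).mul_mem ⟨e, trivial, rfl⟩ hg) hy)

end Refinement

lemma zipOrbit_subset_doubleCoset (τ σ : E →* G) {x : G} {y : G} (hy : y ∈ Gone τ) :
    zipOrbit τ σ (y * x) ⊆ {w : G | ∃ e e' : E, w = τ e * x * σ e'} := by
  rintro w ⟨e, g, ⟨f, -, rfl⟩, rfl⟩
  obtain ⟨d, -, rfl⟩ := hy
  exact ⟨e * f * d, e⁻¹, by simp only [map_mul, map_inv, mul_assoc]⟩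

lemma tau_mul_mul_sigma_inv_mem_zipOrbit (τ σ : E →* G) (x : G) (e : E) :
    τ e * x * (σ e)⁻¹ ∈ zipOrbit τ σ x :=
  ⟨e, 1, one_mem _, by simp⟩

/-- the map y ↦ yx maps Z₁ˣ-equivalence classes in G₁ˣ = τ(E) bijectively
onto the Z-equivalence classes contained in the double coset τ(E) x σ(E). -/
theorem zip_refinement_classes_bijective (τ σ : E →* G) (x : G) :
    (∀ y y' : Gone τ,
      (y' ∈ zipOrbit (tauOne τ σ x) (sigmaOne τ σ x) y ↔
        (y' : G) * x ∈ zipOrbit τ σ ((y : G) * x))) ∧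
    (∀ y : Gone τ,
      zipOrbit τ σ ((y : G) * x) ⊆ {w : G | ∃ e et : E, w = τ e * x * σ et}) ∧
    (∀ w : G, (∃ e et : E, w = τ e * x * σ et) →
      ∃ y : Gone τ, w ∈ zipOrbit τ σ ((y : G) * x)) := by
  refine ⟨fun y y' => ⟨?_, ?_⟩, fun y => zipOrbit_subset_doubleCoset τ σ y.2, ?_⟩
  · rintro ⟨e, g, hg, rfl⟩
    exact ⟨e, g, (mem_GinfX_refined_iff τ σ x y g).1 hg, coe_refined_orbit_elt_mul τ σ x y g e⟩
  · rintro ⟨e, g, hg, h⟩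
    have hgG := GinfX_le_Gone τ σ _ hg
    have he := mem_EoneX_of_eq τ σ x y.2 y'.2 hgG h
    refine ⟨⟨e, he⟩, ⟨g, hgG⟩, (mem_GinfX_refined_iff τ σ x y ⟨g, hgG⟩).2 hg, ?_⟩
    apply Subtype.ext <| mul_right_cancel (b := x) _
    rw [coe_refined_orbit_elt_mul, h]
  · rintro w ⟨e, e', rfl⟩
    refine ⟨⟨τ (e' * e), e' * e, trivial, rfl⟩, ?_⟩
    convert tau_mul_mul_sigma_inv_mem_zipOrbit τ σ (τ (e' * e) * x) e'⁻¹ using 1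
    simp only [map_mul, map_inv, inv_inv, mul_assoc, inv_mul_cancel_left]
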